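/- arXiv:2508.04259 — 2 statements merged into one kernel-verified Lean document; each statement's English description precedes it below -/
import Mathlib

section
/- Let p, q, T be positive integers, let X_1, …, X_T be real p×q matrices, let α ≥ −1 be a real number, set α̃ = √(1+α) − 1, X̄ = (1/T)∑_{t=1}^T X_t, and X*_t = X_t + α̃ X̄. Then (1/(pqT)) ∑_{t=1}^T X*_t (X*_t)ᵀ = (1/(pq)) [ (1+α) · X̄ X̄ᵀ + (1/T) ∑_{t=1}^T (X_t − X̄)(X_t − X̄)ᵀ ]. That is, the α-PCA row statistic M̂_R defined from the moment aggregation equals the second-moment matrix of the transformed data X*_t. -/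
open Matrix

/-- The α-PCA row statistic `M̂_R` defined by moment aggregation equals the second-moment
matrix of the transformed data `X*_t = X_t + (√(1+α) − 1) X̄`. -/
theorem stmt_3 (p q T : ℕ) (hp : 0 < p) (hq : 0 < q) (hT : 0 < T)
    (X : Fin T → Matrix (Fin p) (Fin q) ℝ)
    (α : ℝ) (hα : -1 ≤ α)
    (αtilde : ℝ) (hαtilde : αtilde = Real.sqrt (1 + α) - 1)
    (Xbar : Matrix (Fin p) (Fin q) ℝ) (hXbar : Xbar = (T : ℝ)⁻¹ • ∑ t, X t)
    (Xstar : Fin T → Matrix (Fin p) (Fin q) ℝ)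
    (hXstar : ∀ t, Xstar t = X t + αtilde • Xbar) :
    ((p : ℝ) * q * T)⁻¹ • ∑ t, Xstar t * (Xstar t)ᵀ
      = ((p : ℝ) * q)⁻¹ •
          ((1 + α) • (Xbar * Xbarᵀ) + (T : ℝ)⁻¹ • ∑ t, (X t - Xbar) * (X t - Xbar)ᵀ) := by
  have h1 : (0:ℝ) ≤ 1 + α := by linarith
  have hc : α = αtilde ^ 2 + 2 * αtilde := by
    have hs : Real.sqrt (1 + α) ^ 2 = 1 + α := Real.sq_sqrt h1
    subst hαtilde; nlinarith [hs]
  have hT' : (T:ℝ) ≠ 0 := Nat.cast_ne_zero.mpr hT.ne'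
  have hp' : (p:ℝ) ≠ 0 := Nat.cast_ne_zero.mpr hp.ne'
  have hq' : (q:ℝ) ≠ 0 := Nat.cast_ne_zero.mpr hq.ne'
  have hS : ∑ t, X t = (T:ℝ) • Xbar := by
    rw [hXbar, smul_smul, mul_inv_cancel₀ hT', one_smul]
  set A : Matrix (Fin p) (Fin p) ℝ := ∑ t, X t * (X t)ᵀ with hA
  set B : Matrix (Fin p) (Fin p) ℝ := Xbar * Xbarᵀ with hB
  have e1 : ∑ t, X t * Xbarᵀ = (T:ℝ) • B := by
    rw [← Matrix.sum_mul, hS, Matrix.smul_mul]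
  have e2 : ∑ t, Xbar * (X t)ᵀ = (T:ℝ) • B := by
    rw [← Matrix.mul_sum, ← Matrix.transpose_sum, hS, Matrix.transpose_smul,
      Matrix.mul_smul]
  have key : ∀ t, Xstar t * (Xstar t)ᵀ
      = X t * (X t)ᵀ + αtilde • (X t * Xbarᵀ) + αtilde • (Xbar * (X t)ᵀ)
        + (αtilde ^ 2) • B := by
    intro t
    rw [hXstar]
    simp only [transpose_add, transpose_smul, Matrix.add_mul, Matrix.mul_add,
      Matrix.smul_mul, Matrix.mul_smul, smul_smul, smul_add, sq, hB]
    abel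
  have key2 : ∀ t, (X t - Xbar) * (X t - Xbar)ᵀ
      = X t * (X t)ᵀ - (X t * Xbarᵀ) - (Xbar * (X t)ᵀ) + B := by
    intro t
    simp only [transpose_sub, Matrix.sub_mul, Matrix.mul_sub, hB]
    abel
  have s1 : ∑ t, Xstar t * (Xstar t)ᵀ = A + ((2 * αtilde + αtilde ^ 2) * T) • B := by
    simp only [key, Finset.sum_add_distrib, ← Finset.smul_sum, e1, e2,
      Finset.sum_const, Finset.card_univ, Fintype.card_fin, ← hA]
    rw [← Nat.cast_smul_eq_nsmul ℝ T B]
    module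
  have s2 : ∑ t, (X t - Xbar) * (X t - Xbar)ᵀ = A - (T:ℝ) • B := by
    simp only [key2, Finset.sum_add_distrib, Finset.sum_sub_distrib, e1, e2,
      Finset.sum_const, Finset.card_univ, Fintype.card_fin, ← hA]
    rw [← Nat.cast_smul_eq_nsmul ℝ T B]
    module
  rw [s1, s2, hc]
  match_scalars <;> field_simp <;> ring
end

section
/- Let p, q, T be positive integers, let X_1, …, X_T be real p×q matrices, let α ≥ −1 be a real number, set α̃ = √(1+α) − 1, X̄ = (1/T)∑_{t=1}^T X_t, and X*_t = X_t + α̃ X̄. Then (1/(pqT)) ∑_{t=1}^T (X*_t)ᵀ X*_t = (1/(pq)) [ (1+α) · X̄ᵀ X̄ + (1/T) ∑_{t=1}^T (X_t − X̄)ᵀ(X_t − X̄) ]. That is, the α-PCA column statistic M̂_C defined from the moment aggregation equals the second-moment matrix of the transposed transformed data. -/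
open Matrix

/-!
Writing `X*_t = (X_t - X̄) + √(1+α) • X̄`, the deviations `X_t - X̄` sum to zero, so the cross
terms of `∑ (X*_t)ᵀ X*_t` cancel and only `∑ (X_t - X̄)ᵀ (X_t - X̄) + T (1+α) X̄ᵀ X̄` survives.
-/

theorem Fintype.sum_sub_inv_card_smul_sum {ι 𝕜 E : Type*} [Fintype ι] [DivisionRing 𝕜]
    [CharZero 𝕜] [AddCommGroup E] [Module 𝕜 E] (x : ι → E) :
    ∑ t, (x t - (Fintype.card ι : 𝕜)⁻¹ • ∑ s, x s) = 0 := by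
  cases isEmpty_or_nonempty ι
  · simp
  rw [Finset.sum_sub_distrib, Finset.sum_const, Finset.card_univ, ← Nat.cast_smul_eq_nsmul 𝕜,
    smul_inv_smul₀ (Nat.cast_ne_zero.mpr Fintype.card_ne_zero), sub_self]

theorem Matrix.sum_transpose_mul_add_of_sum_eq_zero {ι m n R : Type*} [Fintype ι] [Fintype m]
    [NonUnitalNonAssocSemiring R] (D : ι → Matrix m n R) (M : Matrix m n R)
    (hD : ∑ t, D t = 0) :
    ∑ t, (D t + M)ᵀ * (D t + M) = ∑ t, (D t)ᵀ * D t + Fintype.card ι • (Mᵀ * M) := by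
  have hleft : ∑ t, (D t)ᵀ * M = 0 := by rw [← Matrix.sum_mul, ← transpose_sum, hD]; simp
  have hright : ∑ t, Mᵀ * D t = 0 := by rw [← Matrix.mul_sum, hD, Matrix.mul_zero]
  simp only [transpose_add, Matrix.add_mul, Matrix.mul_add, Finset.sum_add_distrib, hleft,
    hright, Finset.sum_const, Finset.card_univ]
  abel

theorem stmt_4_general (p q T : ℕ) (hT : 0 < T)
    (X : Fin T → Matrix (Fin p) (Fin q) ℝ)
    (α : ℝ) (hα : -1 ≤ α)
    (αtilde : ℝ) (hαtilde : αtilde = Real.sqrt (1 + α) - 1)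
    (Xbar : Matrix (Fin p) (Fin q) ℝ) (hXbar : Xbar = (T : ℝ)⁻¹ • ∑ t, X t)
    (Xstar : Fin T → Matrix (Fin p) (Fin q) ℝ)
    (hXstar : ∀ t, Xstar t = X t + αtilde • Xbar) :
    ((p : ℝ) * q * T)⁻¹ • ∑ t, (Xstar t)ᵀ * Xstar t
      = ((p : ℝ) * q)⁻¹ •
          ((1 + α) • (Xbarᵀ * Xbar) + (T : ℝ)⁻¹ • ∑ t, (X t - Xbar)ᵀ * (X t - Xbar)) := by
  have hdev : ∑ t, (X t - Xbar) = 0 := by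
    simpa [hXbar] using Fintype.sum_sub_inv_card_smul_sum (𝕜 := ℝ) X
  have hshift : ∀ t, Xstar t = (X t - Xbar) + √(1 + α) • Xbar := by
    intro t
    rw [hXstar, hαtilde]
    module
  have hsq : √(1 + α) ^ 2 = 1 + α := Real.sq_sqrt (by linarith)
  have hT' : (T : ℝ) ≠ 0 := Nat.cast_ne_zero.mpr hT.ne'
  simp only [hshift]
  rw [Matrix.sum_transpose_mul_add_of_sum_eq_zero _ _ hdev, Fintype.card_fin,
    ← Nat.cast_smul_eq_nsmul ℝ, transpose_smul, Matrix.smul_mul, Matrix.mul_smul]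
  match_scalars <;> field_simp
  rw [hsq]

/-- The α-PCA column statistic `M̂_C` defined by moment aggregation equals the second-moment
matrix of the transposed transformed data `X*_t = X_t + (√(1+α) − 1) X̄`. -/
theorem stmt_4 (p q T : ℕ) (hp : 0 < p) (hq : 0 < q) (hT : 0 < T)
    (X : Fin T → Matrix (Fin p) (Fin q) ℝ)
    (α : ℝ) (hα : -1 ≤ α)
    (αtilde : ℝ) (hαtilde : αtilde = Real.sqrt (1 + α) - 1)
    (Xbar : Matrix (Fin p) (Fin q) ℝ) (hXbar : Xbar = (T : ℝ)⁻¹ • ∑ t, X t)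
    (Xstar : Fin T → Matrix (Fin p) (Fin q) ℝ)
    (hXstar : ∀ t, Xstar t = X t + αtilde • Xbar) :
    ((p : ℝ) * q * T)⁻¹ • ∑ t, (Xstar t)ᵀ * Xstar t
      = ((p : ℝ) * q)⁻¹ •
          ((1 + α) • (Xbarᵀ * Xbar) + (T : ℝ)⁻¹ • ∑ t, (X t - Xbar)ᵀ * (X t - Xbar)) :=
  stmt_4_general p q T hT X α hα αtilde hαtilde Xbar hXbar Xstar hXstar
end
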